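/- Let d ≥ 1, let S be a finite set of points in ℝ^d, let k be an integer with 1 ≤ k ≤ |S|, and let σ : {1,…,k} → S be injective. Then p = Σ_{i=1}^k (k+1−i)·σ(i) is an extreme point of the ordered k-set polytope P_k(S) if and only if there exists c ∈ ℝ^d with ⟨c,σ(1)⟩ > ⟨c,σ(2)⟩ > … > ⟨c,σ(k)⟩ and ⟨c,σ(k)⟩ > ⟨c,s⟩ for all s ∈ S outside the image of σ. -/

import Mathlib

open scoped RealInnerProductSpace Pointwise
open MeasureTheory

attribute [local instance] Classical.decEq

noncomputable section

abbrev E (d : ℕ) := EuclideanSpace ℝ (Fin d)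

/-- The unordered k-set polytope `Q_k(S)`: convex hull of the points `∑_{s ∈ A} s`
where `A` ranges over k-element subsets of `S`. -/
def unorderedKSetPolytope (d k : ℕ) (S : Finset (E d)) : Set (E d) :=
  convexHull ℝ {p | ∃ A : Finset (E d), A ⊆ S ∧ A.card = k ∧ p = ∑ s ∈ A, s}

/-- The ordered k-set polytope `P_k(S)`: convex hull of the points
`∑_{i=1}^k (k+1-i) • σ(i)` (here `σ` is 0-indexed, so the weight of `σ i` is `k - i`)
where `σ` ranges over injective maps from `{1,…,k}` into `S`. -/
def orderedKSetPolytope (d k : ℕ) (S : Finset (E d)) : Set (E d) :=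
  convexHull ℝ {p | ∃ σ : Fin k → E d, Function.Injective σ ∧ (∀ i, σ i ∈ S) ∧
    p = ∑ i : Fin k, ((k - (i : ℕ) : ℕ) : ℝ) • σ i}

/-- The normal cone of a set `P` at a point `p`. -/
def normalCone {d : ℕ} (P : Set (E d)) (p : E d) : Set (E d) :=
  {c | ∀ x ∈ P, ⟪c, x⟫ ≤ ⟪c, p⟫}

/-!
The ordered `k`-set polytope is the convex hull of the finite set of sums `∑ (k - i) • σ' i`, so
`p = ∑ (k - i) • σ i` is extreme iff some `⟪c, ·⟫` attains its maximum on that set at `p` alone: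
a uniquely maximizing functional exposes `p`, and conversely Hahn–Banach separates `p` from the
hull of the other sums.

If `c` ranks `σ 0, …, σ (k-1)` strictly above the rest of `S`, peeling off the last index,
`∑ (k + 1 - i) xᵢ = ∑ xᵢ + ∑_{i < k} (k - i) xᵢ`, reduces uniqueness of the maximizer to the
fact that the image of `σ` is the unique `k`-subset of `S` of largest `c`-sum. Conversely,
swapping two values of `σ`, or replacing one by a point of `S` outside its image, gives another
sum, and comparing `c`-values forces the ranking.
-/

section ExtremePoints

variable {E : Type*} [AddCommGroup E] [Module ℝ E] {V : Set E} {p : E}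

theorem convex_insert_setOf_lt (f : E →ₗ[ℝ] ℝ) (p : E) :
    Convex ℝ (insert p {x | f x < f p}) := by
  refine convex_iff_forall_pos.2 fun x hx y hy a b ha hb hab => ?_
  obtain rfl : a = 1 - b := by linarith
  rcases hx with hx | hx <;> rcases hy with hy | hy
  · rw [hx, hy, ← add_smul, sub_add_cancel, one_smul]; exact Set.mem_insert _ _
  all_goals
    right
    change f (_ + _) < f p
    rw [map_add, map_smul, map_smul, smul_eq_mul, smul_eq_mul]
  · rw [hx]; nlinarith [mul_lt_mul_of_pos_left hy hb]
  · rw [hy]; nlinarith [mul_lt_mul_of_pos_left hx ha]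
  · nlinarith [mul_lt_mul_of_pos_left hx ha, mul_lt_mul_of_pos_left hy hb]

variable [TopologicalSpace E]

theorem mem_exposedPoints_convexHull_of_forall_lt (l : StrongDual ℝ E) (hp : p ∈ V)
    (hlt : ∀ x ∈ V, x ≠ p → l x < l p) : p ∈ (convexHull ℝ V).exposedPoints ℝ := by
  have hsub : convexHull ℝ V ⊆ insert p {x | l x < l p} :=
    convexHull_min (fun x hx => (eq_or_ne x p).imp id (hlt x hx))
      (convex_insert_setOf_lt (l : E →ₗ[ℝ] ℝ) p)
  refine ⟨subset_convexHull ℝ V hp, l, fun y hy => ?_⟩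
  rcases hsub hy with rfl | hy
  · exact ⟨le_rfl, fun _ => rfl⟩
  · exact ⟨le_of_lt hy, fun h => absurd hy h.not_gt⟩

theorem Set.Finite.exists_forall_lt_of_mem_extremePoints_convexHull [IsTopologicalAddGroup E]
    [ContinuousSMul ℝ E] [LocallyConvexSpace ℝ E] [T2Space E] (hV : V.Finite)
    (hp : p ∈ (convexHull ℝ V).extremePoints ℝ) :
    ∃ l : StrongDual ℝ E, ∀ x ∈ V, x ≠ p → l x < l p := by
  have hp' : p ∉ convexHull ℝ (V \ {p}) := fun h =>
    ((convex_convexHull ℝ V).mem_extremePoints_iff_mem_sdiff_convexHull_sdiff.1 hp).2 <|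
      convexHull_mono (Set.sdiff_subset_sdiff_left (subset_convexHull ℝ V)) h
  obtain ⟨l, u, hlu, hup⟩ := geometric_hahn_banach_closed_point (convex_convexHull ℝ _)
    ((hV.subset Set.sdiff_subset).isClosed_convexHull ℝ) hp'
  exact ⟨l, fun x hx hxp => (hlu x (subset_convexHull ℝ _ ⟨hx, hxp⟩)).trans hup⟩

end ExtremePoints

theorem Set.Finite.mem_extremePoints_convexHull_iff_exists_inner_lt {F : Type*}
    [NormedAddCommGroup F] [InnerProductSpace ℝ F] [CompleteSpace F] {V : Set F} {p : F}
    (hV : V.Finite) (hp : p ∈ V) :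
    p ∈ (convexHull ℝ V).extremePoints ℝ ↔ ∃ c : F, ∀ x ∈ V, x ≠ p → ⟪c, x⟫ < ⟪c, p⟫ := by
  refine ⟨fun hext => ?_, fun ⟨c, hc⟩ => exposedPoints_subset_extremePoints
    (mem_exposedPoints_convexHull_of_forall_lt (innerSL ℝ c) hp hc)⟩
  obtain ⟨l, hl⟩ := hV.exists_forall_lt_of_mem_extremePoints_convexHull hext
  refine ⟨(InnerProductSpace.toDual ℝ F).symm l, fun x hx hxp => ?_⟩
  simpa only [InnerProductSpace.toDual_symm_apply] using hl x hx hxp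

namespace Finset

variable {ι R : Type*} [AddCommMonoid R] [LinearOrder R] [IsOrderedCancelAddMonoid R]
  {A B : Finset ι} {f : ι → R}

theorem sum_lt_sum_of_card_eq_of_forall_lt (hcard : #A = #B) (hne : A ≠ B)
    (hlt : ∀ a ∈ A \ B, ∀ b ∈ B \ A, f a < f b) : ∑ a ∈ A, f a < ∑ b ∈ B, f b := by
  have hAB : (A \ B).Nonempty := sdiff_nonempty.2 fun h => hne (eq_of_subset_of_card_le h hcard.ge)
  have hcard' : #(A \ B) = #(B \ A) := card_sdiff_comm hcard
  obtain ⟨b₀, hb₀, hmin⟩ := (B \ A).exists_min_image f (card_pos.1 (hcard' ▸ hAB.card_pos))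
  have hsdiff : ∑ a ∈ A \ B, f a < ∑ b ∈ B \ A, f b :=
    calc ∑ a ∈ A \ B, f a < ∑ _a ∈ A \ B, f b₀ :=
          sum_lt_sum_of_nonempty hAB fun a ha => hlt a ha b₀ hb₀
      _ = #(B \ A) • f b₀ := by rw [sum_const, hcard']
      _ ≤ ∑ b ∈ B \ A, f b := card_nsmul_le_sum _ _ _ hmin
  rw [← sum_inter_add_sum_sdiff A B, ← sum_inter_add_sum_sdiff B A, inter_comm]
  exact (add_lt_add_iff_left _).2 hsdiff

end Finset

theorem Function.Injective.update_of_notMem_range {ι α : Type*} [DecidableEq ι] {σ : ι → α}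
    (hσ : Function.Injective σ) {x : α} (hx : x ∉ Set.range σ) (i : ι) :
    Function.Injective (Function.update σ i x) := by
  intro a b h
  by_cases ha : a = i <;> by_cases hb : b = i
  · rw [ha, hb]
  · rw [ha, Function.update_self, Function.update_of_ne hb] at h
    exact absurd ⟨b, h.symm⟩ hx
  · rw [hb, Function.update_self, Function.update_of_ne ha] at h
    exact absurd ⟨a, h⟩ hx
  · rw [Function.update_of_ne ha, Function.update_of_ne hb] at h
    exact hσ h

section RankedSum

variable {M : Type*} [AddCommGroup M] [Module ℝ M] {k : ℕ}

def rankedSum (v : Fin k → M) : M :=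
  ∑ i : Fin k, ((k - (i : ℕ) : ℕ) : ℝ) • v i

theorem rankedSum_succ (v : Fin (k + 1) → M) :
    rankedSum v = ∑ i, v i + rankedSum fun i : Fin k => v i.castSucc := by
  simp only [rankedSum, Fin.sum_univ_castSucc, Fin.val_castSucc, Fin.val_last,
    Nat.add_sub_cancel_left, Nat.cast_one, one_smul]
  rw [add_comm (∑ i : Fin k, v i.castSucc), add_assoc, ← Finset.sum_add_distrib, add_comm]
  congr 1
  refine Finset.sum_congr rfl fun i _ => ?_
  rw [Nat.sub_add_comm i.is_le', Nat.cast_succ, add_smul, one_smul, add_comm]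

theorem rankedSum_update (v : Fin k → M) (l : Fin k) (x : M) :
    rankedSum (Function.update v l x) = rankedSum v + ((k - (l : ℕ) : ℕ) : ℝ) • (x - v l) := by
  rw [← sub_eq_iff_eq_add', rankedSum, rankedSum, ← Finset.sum_sub_distrib,
    Fintype.sum_eq_single l fun i hi => by rw [Function.update_of_ne hi, sub_self],
    Function.update_self, smul_sub]

theorem rankedSum_comp_swap (v : Fin k → M) (i j : Fin k) :
    rankedSum (v ∘ Equiv.swap i j) =
      rankedSum v + (((k - (i : ℕ) : ℕ) : ℝ) - ((k - (j : ℕ) : ℕ) : ℝ)) • (v j - v i) := by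
  rw [Equiv.comp_swap_eq_update, rankedSum_update, rankedSum_update, Function.update_apply]
  split_ifs with h
  · subst h; simp
  · module

theorem inner_rankedSum {F : Type*} [NormedAddCommGroup F] [InnerProductSpace ℝ F] (c : F)
    (v : Fin k → F) : ⟪c, rankedSum v⟫ = rankedSum fun i => ⟪c, v i⟫ := by
  simp only [rankedSum, inner_sum, real_inner_smul_right, smul_eq_mul]

end RankedSum

section Ranking

variable {α ι : Type*} [Fintype ι] {f : α → ℝ} {S : Finset α} {σ σ' : ι → α}

theorem sum_comp_lt_sum_comp_of_image_ne (hσ : Function.Injective σ)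
    (hσ' : Function.Injective σ') (hσ'S : ∀ i, σ' i ∈ S)
    (hout : ∀ s ∈ S, s ∉ Set.range σ → ∀ i, f s < f (σ i))
    (hne : Finset.univ.image σ' ≠ Finset.univ.image σ) :
    ∑ i, f (σ' i) < ∑ i, f (σ i) := by
  rw [← Finset.sum_image hσ'.injOn, ← Finset.sum_image hσ.injOn]
  refine Finset.sum_lt_sum_of_card_eq_of_forall_lt
    (by simp [Finset.card_image_of_injective, hσ, hσ']) hne ?_
  intro a ha b hb
  simp only [Finset.mem_sdiff, Finset.mem_image, Finset.mem_univ, true_and, not_exists] at ha hb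
  obtain ⟨⟨i, rfl⟩, ha⟩ := ha
  obtain ⟨⟨j, rfl⟩, -⟩ := hb
  exact hout _ (hσ'S i) (fun ⟨l, hl⟩ => ha l hl) j

theorem sum_comp_le_sum_comp (hσ : Function.Injective σ)
    (hσ' : Function.Injective σ') (hσ'S : ∀ i, σ' i ∈ S)
    (hout : ∀ s ∈ S, s ∉ Set.range σ → ∀ i, f s < f (σ i)) :
    ∑ i, f (σ' i) ≤ ∑ i, f (σ i) := by
  rcases eq_or_ne (Finset.univ.image σ') (Finset.univ.image σ) with h | h
  · rw [← Finset.sum_image hσ'.injOn, ← Finset.sum_image hσ.injOn, h]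
  · exact (sum_comp_lt_sum_comp_of_image_ne hσ hσ' hσ'S hout h).le

theorem rankedSum_comp_lt_rankedSum_comp {k : ℕ} {σ σ' : Fin k → α} (hσ : Function.Injective σ)
    (hanti : StrictAnti (f ∘ σ)) (hout : ∀ s ∈ S, s ∉ Set.range σ → ∀ i, f s < f (σ i))
    (hσ' : Function.Injective σ') (hσ'S : ∀ i, σ' i ∈ S) (hne : σ' ≠ σ) :
    rankedSum (f ∘ σ') < rankedSum (f ∘ σ) := by
  induction k with
  | zero => exact absurd (Subsingleton.elim σ' σ) hne
  | succ k ih =>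
    rw [rankedSum_succ, rankedSum_succ]
    by_cases hinit : σ' ∘ Fin.castSucc = σ ∘ Fin.castSucc
    · have hlast : σ' (Fin.last k) ∉ Set.range σ := by
        rintro ⟨j, hj⟩
        induction j using Fin.lastCases with
        | last => exact hne (funext fun i => Fin.lastCases hj.symm (congrFun hinit) i)
        | cast j =>
          rw [← show σ' j.castSucc = σ j.castSucc from congrFun hinit j] at hj
          exact (Fin.castSucc_lt_last j).ne (hσ' hj)
      refine add_lt_add_of_lt_of_le
        (sum_comp_lt_sum_comp_of_image_ne hσ hσ' hσ'S hout fun h => hlast ?_) (le_of_eq ?_)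
      · have := h ▸ Finset.mem_image_of_mem σ' (Finset.mem_univ (Fin.last k))
        simpa using this
      · exact congrArg (fun g => rankedSum (f ∘ g)) hinit
    · refine add_lt_add_of_le_of_lt (sum_comp_le_sum_comp hσ hσ' hσ'S hout)
        (ih (hσ.comp (Fin.castSucc_injective k)) (hanti.comp_strictMono Fin.strictMono_castSucc)
          ?_ (hσ'.comp (Fin.castSucc_injective k)) (fun i => hσ'S _) hinit)
      intro s hs hsr i
      by_cases hσs : s ∈ Set.range σ
      · obtain ⟨j, rfl⟩ := hσs
        induction j using Fin.lastCases with
        | last => exact hanti (Fin.castSucc_lt_last i)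
        | cast j => exact absurd ⟨j, rfl⟩ hsr
      · exact hout s hs hσs _

end Ranking

section OrderedKSets

variable {F : Type*} [NormedAddCommGroup F] [InnerProductSpace ℝ F] {k : ℕ} {S : Finset F}
  {σ : Fin k → F} {c : F}

def rankedSums (k : ℕ) (S : Finset F) : Set F :=
  {p | ∃ σ : Fin k → F, Function.Injective σ ∧ (∀ i, σ i ∈ S) ∧ p = rankedSum σ}

theorem finite_rankedSums (k : ℕ) (S : Finset F) : (rankedSums k S).Finite := by
  refine (Set.finite_range fun τ : Fin k → S => rankedSum fun i => (τ i : F)).subset ?_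
  rintro _ ⟨σ, -, hσS, rfl⟩
  exact ⟨fun i => ⟨σ i, hσS i⟩, rfl⟩

theorem inner_neg_of_forall_inner_lt {V : Set F} {p u : F} {a : ℝ}
    (hmax : ∀ q ∈ V, q ≠ p → ⟪c, q⟫ < ⟪c, p⟫) (hq : p + a • u ∈ V) (ha : 0 < a) (hu : u ≠ 0) :
    ⟪c, u⟫ < 0 := by
  have hlt := hmax _ hq (by simpa [ha.ne'] using hu)
  rw [inner_add_right, real_inner_smul_right, add_lt_iff_neg_left] at hlt
  exact neg_of_mul_neg_right hlt ha.le

theorem strictAnti_inner_of_forall_inner_lt (hσ : Function.Injective σ) (hσS : ∀ i, σ i ∈ S)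
    (hmax : ∀ q ∈ rankedSums k S, q ≠ rankedSum σ → ⟪c, q⟫ < ⟪c, rankedSum σ⟫) :
    StrictAnti fun i => ⟪c, σ i⟫ := by
  intro i j hij
  have hq : rankedSum (σ ∘ Equiv.swap i j) ∈ rankedSums k S :=
    ⟨_, hσ.comp (Equiv.injective _), fun _ => hσS _, rfl⟩
  rw [rankedSum_comp_swap] at hq
  have hweight : ((k - (j : ℕ) : ℕ) : ℝ) < ((k - (i : ℕ) : ℕ) : ℝ) :=
    Nat.cast_lt.2 (Nat.sub_lt_sub_left i.is_lt hij)
  have := inner_neg_of_forall_inner_lt hmax hq (sub_pos.2 hweight) (sub_ne_zero.2 (hσ.ne hij.ne'))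
  rwa [inner_sub_right, sub_neg] at this

theorem inner_lt_of_forall_inner_lt (hσ : Function.Injective σ) (hσS : ∀ i, σ i ∈ S)
    (hmax : ∀ q ∈ rankedSums k S, q ≠ rankedSum σ → ⟪c, q⟫ < ⟪c, rankedSum σ⟫)
    {s : F} (hs : s ∈ S) (hsσ : s ∉ Set.range σ) (i : Fin k) : ⟪c, s⟫ < ⟪c, σ i⟫ := by
  have hq : rankedSum (Function.update σ i s) ∈ rankedSums k S :=
    ⟨_, hσ.update_of_notMem_range hsσ i,
      (Function.forall_update_iff _ fun _ x => x ∈ S).2 ⟨hs, fun j _ => hσS j⟩, rfl⟩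
  rw [rankedSum_update] at hq
  have hweight : (0 : ℝ) < ((k - (i : ℕ) : ℕ) : ℝ) := Nat.cast_pos.2 (Nat.sub_pos_of_lt i.is_lt)
  have := inner_neg_of_forall_inner_lt hmax hq hweight (sub_ne_zero.2 fun h => hsσ ⟨i, h.symm⟩)
  rwa [inner_sub_right, sub_neg] at this

theorem forall_inner_lt_of_strictAnti (hσ : Function.Injective σ)
    (hanti : StrictAnti fun i => ⟪c, σ i⟫)
    (hout : ∀ s ∈ S, s ∉ Set.range σ → ∀ i, ⟪c, s⟫ < ⟪c, σ i⟫) :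
    ∀ q ∈ rankedSums k S, q ≠ rankedSum σ → ⟪c, q⟫ < ⟪c, rankedSum σ⟫ := by
  rintro _ ⟨σ', hσ', hσ'S, rfl⟩ hne
  rw [inner_rankedSum, inner_rankedSum]
  exact rankedSum_comp_lt_rankedSum_comp (f := fun x => ⟪c, x⟫) hσ hanti hout hσ' hσ'S
    fun h => hne (h ▸ rfl)

end OrderedKSets

/-- `∑_i (k+1-i) • σ(i)` is an extreme point of the ordered k-set polytope iff there is a
`c` with `⟨c,σ(1)⟩ > … > ⟨c,σ(k)⟩` and `⟨c,σ(k)⟩ > ⟨c,s⟩` for `s ∈ S` outside the image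
of `σ`. -/
theorem extremePoint_iff_strict_ranking_ordered
    (d : ℕ) (S : Finset (E d)) (k : ℕ) (hk1 : 1 ≤ k)
    (σ : Fin k → E d) (hσinj : Function.Injective σ) (hσS : ∀ i, σ i ∈ S) :
    (∑ i : Fin k, ((k - (i : ℕ) : ℕ) : ℝ) • σ i) ∈
        Set.extremePoints ℝ (orderedKSetPolytope d k S) ↔
      ∃ c : E d, (∀ i j : Fin k, i < j → ⟪c, σ j⟫ < ⟪c, σ i⟫) ∧
        ∀ s ∈ S, s ∉ Set.range σ → ⟪c, s⟫ < ⟪c, σ ⟨k - 1, by omega⟩⟫ := by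
  change rankedSum σ ∈ (convexHull ℝ (rankedSums k S)).extremePoints ℝ ↔ _
  rw [(finite_rankedSums k S).mem_extremePoints_convexHull_iff_exists_inner_lt
    ⟨σ, hσinj, hσS, rfl⟩]
  constructor
  · rintro ⟨c, hmax⟩
    exact ⟨c, fun i j hij => strictAnti_inner_of_forall_inner_lt hσinj hσS hmax hij,
      fun s hs hsσ => inner_lt_of_forall_inner_lt hσinj hσS hmax hs hsσ _⟩
  · rintro ⟨c, hanti, hlast⟩
    have hanti' : StrictAnti fun i => ⟪c, σ i⟫ := fun i j => hanti i j
    refine ⟨c, forall_inner_lt_of_strictAnti hσinj hanti' fun s hs hsσ i => ?_⟩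
    exact (hlast s hs hsσ).trans_le (hanti'.antitone (Fin.le_def.2 (Nat.le_sub_one_of_lt i.is_lt)))
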